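/- arXiv:2202.06110 — 5 statements merged into one kernel-verified Lean document; each statement's English description precedes it below -/
import Mathlib

section
/- Darboux's lemma: Let q : ℝ → ℝ be continuous, λ ≠ μ real numbers. If f satisfies -f'' + q·f = λ·f, g satisfies -g'' + q·g = μ·g, and g(x) ≠ 0 on an interval I, then the function h = (g·f' - g'·f)/g satisfies -h'' + (q - 2·(log g)'')·h = λ·h on I. -/
/-!
With `L = g'/g` the logarithmic derivative of `g`, one has `h = f' - L f` wherever `g ≠ 0`, and
`(log g)'' = L'`. The equation for `g` becomes the Riccati equation `L' = q - μ - L²`, and with the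
equation for `f` it gives the first-order relation `h' = (μ - λ) f - L h`. Differentiating once
more, `-h'' + (q - 2 L') h = -(μ - λ) (f' - L f) + μ h = λ h`.
-/

open Filter Topology

def IsSchrodingerSolution (q : ℝ → ℝ) (E : ℝ) (u : ℝ → ℝ) : Prop :=
  ∀ x, -(deriv (deriv u) x) + q x * u x = E * u x

noncomputable def darbouxTransform (g f : ℝ → ℝ) (y : ℝ) : ℝ :=
  (g y * deriv f y - deriv g y * f y) / g y

section

variable {q f g u : ℝ → ℝ} {lam mu E x : ℝ}

theorem darbouxTransform_eq (hx : g x ≠ 0) :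
    darbouxTransform g f x = deriv f x - logDeriv g x * f x := by
  rw [darbouxTransform, logDeriv_apply]
  field_simp

theorem darbouxTransform_eventuallyEq (hg : Continuous g) (hx : g x ≠ 0) :
    darbouxTransform g f =ᶠ[𝓝 x] fun y => deriv f y - logDeriv g y * f y := by
  filter_upwards [hg.continuousAt.eventually_ne hx] with y hy
  exact darbouxTransform_eq hy

namespace IsSchrodingerSolution

theorem deriv_deriv_eq (hu : IsSchrodingerSolution q E u) (x : ℝ) :
    deriv (deriv u) x = (q x - E) * u x := by
  linarith [hu x]

theorem hasDerivAt_logDeriv (hu : IsSchrodingerSolution q E u) (hu2 : ContDiff ℝ 2 u)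
    (hx : u x ≠ 0) : HasDerivAt (logDeriv u) (q x - E - logDeriv u x ^ 2) x := by
  have hquot := (hu2.differentiable_deriv_two x).hasDerivAt.div
    ((hu2.differentiable (by norm_num)) x).hasDerivAt hx
  refine hquot.congr_deriv ?_
  rw [hu.deriv_deriv_eq, logDeriv_apply]
  field_simp

theorem deriv_deriv_log (hu : IsSchrodingerSolution q E u) (hu2 : ContDiff ℝ 2 u)
    (hx : u x ≠ 0) :
    deriv (deriv fun y => Real.log (u y)) x = q x - E - logDeriv u x ^ 2 := by
  have hu1 : Differentiable ℝ u := hu2.differentiable (by norm_num)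
  have hlog : deriv (fun y => Real.log (u y)) =ᶠ[𝓝 x] logDeriv u := by
    filter_upwards [hu1.continuous.continuousAt.eventually_ne hx] with y hy
    exact deriv.log (hu1 y) hy
  rw [hlog.deriv_eq]
  exact (hu.hasDerivAt_logDeriv hu2 hx).deriv

theorem hasDerivAt_darbouxTransform (hf : IsSchrodingerSolution q lam f)
    (hg : IsSchrodingerSolution q mu g) (hf2 : ContDiff ℝ 2 f) (hg2 : ContDiff ℝ 2 g)
    (hx : g x ≠ 0) :
    HasDerivAt (darbouxTransform g f)
      ((mu - lam) * f x - logDeriv g x * darbouxTransform g f x) x := by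
  have hf1 : Differentiable ℝ f := hf2.differentiable (by norm_num)
  have hrhs := (hf2.differentiable_deriv_two x).hasDerivAt.sub
    ((hg.hasDerivAt_logDeriv hg2 hx).mul (hf1 x).hasDerivAt)
  refine (hrhs.congr_of_eventuallyEq
    (darbouxTransform_eventuallyEq hg2.continuous hx)).congr_deriv ?_
  rw [hf.deriv_deriv_eq, darbouxTransform_eq hx]
  ring

theorem darbouxTransform_solves (hf : IsSchrodingerSolution q lam f)
    (hg : IsSchrodingerSolution q mu g) (hf2 : ContDiff ℝ 2 f) (hg2 : ContDiff ℝ 2 g)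
    (hx : g x ≠ 0) :
    -(deriv (deriv (darbouxTransform g f)) x)
        + (q x - 2 * deriv (deriv fun y => Real.log (g y)) x) * darbouxTransform g f x
      = lam * darbouxTransform g f x := by
  have hderiv : deriv (darbouxTransform g f) =ᶠ[𝓝 x]
      fun y => (mu - lam) * f y - logDeriv g y * darbouxTransform g f y := by
    filter_upwards [hg2.continuous.continuousAt.eventually_ne hx] with y hy
    exact (hf.hasDerivAt_darbouxTransform hg hf2 hg2 hy).deriv
  have hsecond := (((hf2.differentiable (by norm_num)) x).hasDerivAt.const_mul (mu - lam)).fun_sub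
    ((hg.hasDerivAt_logDeriv hg2 hx).fun_mul (hf.hasDerivAt_darbouxTransform hg hf2 hg2 hx))
  rw [hderiv.deriv_eq, hsecond.deriv, hg.deriv_deriv_log hg2 hx, darbouxTransform_eq hx]
  ring

end IsSchrodingerSolution

end

theorem darboux_lemma_general (q f g : ℝ → ℝ) (lam mu : ℝ) (I : Set ℝ)
    (hf : ContDiff ℝ 2 f) (hg : ContDiff ℝ 2 g)
    (hfe : ∀ x, -(deriv (deriv f) x) + q x * f x = lam * f x)
    (hge : ∀ x, -(deriv (deriv g) x) + q x * g x = mu * g x)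
    (hg0 : ∀ x ∈ I, g x ≠ 0) :
    ∀ x ∈ I,
      -(deriv (deriv (fun y => (g y * deriv f y - deriv g y * f y) / g y)) x)
        + (q x - 2 * deriv (deriv (fun y => Real.log (g y))) x)
          * ((g x * deriv f x - deriv g x * f x) / g x)
      = lam * ((g x * deriv f x - deriv g x * f x) / g x) :=
  fun x hx => IsSchrodingerSolution.darbouxTransform_solves hfe hge hf hg (hg0 x hx)

/-- Darboux's lemma: if `-f'' + q f = λ f`, `-g'' + q g = μ g` with `λ ≠ μ`, and `g` is
nonvanishing on an open interval `I`, then `h = (g f' - g' f)/g` satisfies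
`-h'' + (q - 2 (log g)'') h = λ h` on `I`. -/
theorem darboux_lemma (q f g : ℝ → ℝ) (lam mu : ℝ) (I : Set ℝ) (hI : IsOpen I)
    (hq : Continuous q) (hf : ContDiff ℝ 2 f) (hg : ContDiff ℝ 2 g)
    (hlm : lam ≠ mu)
    (hfe : ∀ x, -(deriv (deriv f) x) + q x * f x = lam * f x)
    (hge : ∀ x, -(deriv (deriv g) x) + q x * g x = mu * g x)
    (hg0 : ∀ x ∈ I, g x ≠ 0) :
    ∀ x ∈ I,
      -(deriv (deriv (fun y => (g y * deriv f y - deriv g y * f y) / g y)) x)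
        + (q x - 2 * deriv (deriv (fun y => Real.log (g y))) x)
          * ((g x * deriv f x - deriv g x * f x) / g x)
      = lam * ((g x * deriv f x - deriv g x * f x) / g x) :=
  darboux_lemma_general q f g lam mu I hf hg hfe hge hg0
end

section
/- In the case λ = μ of Darboux's lemma: if g satisfies -g'' + q·g = μ·g and g ≠ 0 on an interval I, then for any constants a, b ∈ ℝ, the function u(x) = (1/g(x))·(a + b·∫₀ˣ g(s)² ds) satisfies -u'' + (q - 2(log g)'')·u = μ·u on I. -/
/-!
Write `φ = g'/g = (log g)'` and `u = (a + b F) / g` with `F' = g²`. Then `u' = -φ u + b g`, and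
differentiating once more, the terms `-φ (b g) + b g'` cancel because `φ g = g'`, leaving
`u'' = (φ² - φ') u`. The Riccati equation `φ' = g''/g - φ² = q - μ - φ²` then gives
`-u'' + (q - 2 φ') u = (q - φ' - φ²) u = μ u`.
-/

open Real Filter Topology

section

variable {g : ℝ → ℝ} {x : ℝ}

theorem hasDerivAt_logDeriv (hg : ContDiff ℝ 2 g) (hx : g x ≠ 0) :
    HasDerivAt (logDeriv g) (deriv (deriv g) x / g x - logDeriv g x ^ 2) x := by
  refine ((hg.differentiable_deriv_two x).hasDerivAt.div
    (hg.differentiable two_ne_zero x).hasDerivAt hx).congr_deriv ?_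
  rw [logDeriv_apply]
  field_simp

theorem deriv_deriv_log_comp (hg : Differentiable ℝ g) (hx : g x ≠ 0) :
    deriv (deriv fun y => log (g y)) x = deriv (logDeriv g) x := by
  have h : deriv (fun y => log (g y)) =ᶠ[𝓝 x] logDeriv g := by
    filter_upwards [hg.continuous.continuousAt.eventually_ne hx] with y hy
    exact Real.deriv_log_comp_eq_logDeriv (hg y) hy
  exact h.deriv_eq

theorem hasDerivAt_one_div_mul_primitive_sq {F : ℝ → ℝ} (a b : ℝ) (hg : DifferentiableAt ℝ g x)
    (hx : g x ≠ 0) (hF : HasDerivAt F (g x ^ 2) x) :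
    HasDerivAt (fun y => 1 / g y * (a + b * F y))
      (-logDeriv g x * (1 / g x * (a + b * F x)) + b * g x) x := by
  simp only [one_div]
  refine ((hg.hasDerivAt.inv hx).mul ((hF.const_mul b).const_add a)).congr_deriv ?_
  rw [logDeriv_apply, Pi.inv_apply]
  field_simp

theorem deriv_deriv_one_div_mul_primitive_sq {F : ℝ → ℝ} (a b : ℝ) (hg : ContDiff ℝ 2 g)
    (hF : ∀ y, HasDerivAt F (g y ^ 2) y) (hx : g x ≠ 0) :
    deriv (deriv fun y => 1 / g y * (a + b * F y)) x
      = (logDeriv g x ^ 2 - deriv (logDeriv g) x) * (1 / g x * (a + b * F x)) := by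
  have hg1 : Differentiable ℝ g := hg.differentiable two_ne_zero
  set u : ℝ → ℝ := fun y => 1 / g y * (a + b * F y)
  have hu : ∀ y, g y ≠ 0 → HasDerivAt u (-logDeriv g y * u y + b * g y) y :=
    fun y hy => hasDerivAt_one_div_mul_primitive_sq a b (hg1 y) hy (hF y)
  have hu' : deriv u =ᶠ[𝓝 x] fun y => -logDeriv g y * u y + b * g y := by
    filter_upwards [hg.continuous.continuousAt.eventually_ne hx] with y hy
    exact (hu y hy).deriv
  have hφ := hasDerivAt_logDeriv hg hx
  have hu'' : HasDerivAt (fun y => -logDeriv g y * u y + b * g y)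
      (-(deriv (deriv g) x / g x - logDeriv g x ^ 2) * u x
        + -logDeriv g x * (-logDeriv g x * u x + b * g x) + b * deriv g x) x :=
    (hφ.neg.mul (hu x hx)).add ((hg1 x).hasDerivAt.const_mul b)
  rw [hu'.deriv_eq, hu''.deriv, hφ.deriv]
  have hφg : logDeriv g x * g x = deriv g x := by rw [logDeriv_apply]; field_simp
  linear_combination (-b) * hφg

end

theorem darboux_lemma_equal_eigenvalue_general (q g : ℝ → ℝ) (mu : ℝ) (I : Set ℝ)
    (hg : ContDiff ℝ 2 g)
    (hge : ∀ x, -(deriv (deriv g) x) + q x * g x = mu * g x)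
    (hg0 : ∀ x ∈ I, g x ≠ 0) (a b : ℝ) :
    ∀ x ∈ I,
      -(deriv (deriv (fun y => (1 / g y) * (a + b * ∫ s in (0:ℝ)..y, (g s) ^ 2))) x)
        + (q x - 2 * deriv (deriv (fun y => Real.log (g y))) x)
          * ((1 / g x) * (a + b * ∫ s in (0:ℝ)..x, (g s) ^ 2))
      = mu * ((1 / g x) * (a + b * ∫ s in (0:ℝ)..x, (g s) ^ 2)) := by
  intro x hx
  have hF : ∀ y, HasDerivAt (fun t => ∫ s in (0:ℝ)..t, g s ^ 2) (g y ^ 2) y :=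
    fun y => ((hg.continuous.pow 2).integral_hasStrictDerivAt 0 y).hasDerivAt
  have hgx := hg0 x hx
  have hgg : deriv (deriv g) x = (q x - mu) * g x := by linarith [hge x]
  rw [deriv_deriv_one_div_mul_primitive_sq a b hg hF hgx,
    deriv_deriv_log_comp (hg.differentiable two_ne_zero) hgx, (hasDerivAt_logDeriv hg hgx).deriv,
    hgg]
  field_simp
  ring

/-- Darboux's lemma, equal eigenvalue case: if `-g'' + q g = μ g` and `g ≠ 0` on an open
interval `I` containing `0`, then for any `a b : ℝ` the function
`u x = (1/g x) * (a + b * ∫₀ˣ g(s)² ds)` satisfies `-u'' + (q - 2 (log g)'') u = μ u` on `I`. -/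
theorem darboux_lemma_equal_eigenvalue (q g : ℝ → ℝ) (mu : ℝ) (I : Set ℝ) (hI : IsOpen I)
    (hI0 : (0 : ℝ) ∈ I)
    (hq : Continuous q) (hg : ContDiff ℝ 2 g)
    (hge : ∀ x, -(deriv (deriv g) x) + q x * g x = mu * g x)
    (hg0 : ∀ x ∈ I, g x ≠ 0) (a b : ℝ) :
    ∀ x ∈ I,
      -(deriv (deriv (fun y => (1 / g y) * (a + b * ∫ s in (0:ℝ)..y, (g s) ^ 2))) x)
        + (q x - 2 * deriv (deriv (fun y => Real.log (g y))) x)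
          * ((1 / g x) * (a + b * ∫ s in (0:ℝ)..x, (g s) ^ 2))
      = mu * ((1 / g x) * (a + b * ∫ s in (0:ℝ)..x, (g s) ^ 2)) :=
  darboux_lemma_equal_eigenvalue_general q g mu I hg hge hg0 a b
end

section
/- Double Darboux transformation: let f, g, h satisfy -f'' + q f = λ f, -g'' + q g = μ g, and -h'' + (q - 2(log g)'')·h = ν h, with λ ∉ {μ, ν}, and g, h nonvanishing on an interval I. Then the function u = (μ - λ)·f - (W[g,f]/g)·(log(g·h))' satisfies -u'' + (q - 2(log(g·h))'')·u = λ·u on I. -/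
/-!
One Darboux step: if `g` solves `-g'' + q g = μ g` and does not vanish, then `f ↦ W[g,f]/g`
maps solutions of `-f'' + q f = λ f` to solutions for the potential `q - 2 (log g)''`; the key
facts are `W[g,f]' = (μ - λ) g f` and the Riccati equation `(g'/g)' = q - μ - (g'/g)²`.
The double transformation is a step with `g` followed by a step with `h`. Since
`(W[g,f]/g)' = (μ - λ) f - (g'/g) W[g,f]/g`, the composite `W[h, W[g,f]/g]/h` is exactly `u`,
and the two potential corrections add up to `-2 (log (g h))''`.
-/

open Filter Topology Set

section Darboux

variable {𝕜 : Type*} [NontriviallyNormedField 𝕜]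

noncomputable def wronskian (g f : 𝕜 → 𝕜) (x : 𝕜) : 𝕜 := g x * deriv f x - deriv g x * f x

/-- `-f'' + q f = λ f` on `U`, with `f` and `f'` differentiable there, so that no junk value of
`deriv` enters. -/
def SolvesSchrodingerOn (q : 𝕜 → 𝕜) (lam : 𝕜) (U : Set 𝕜) (f : 𝕜 → 𝕜) : Prop :=
  ∀ x ∈ U, HasDerivAt f (deriv f x) x ∧ HasDerivAt (deriv f) ((q x - lam) * f x) x

namespace SolvesSchrodingerOn

variable {q f g h : 𝕜 → 𝕜} {lam mu : 𝕜} {U : Set 𝕜} {x : 𝕜}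

theorem of_contDiff (hf : ContDiff 𝕜 2 f)
    (he : ∀ x ∈ U, -(deriv (deriv f) x) + q x * f x = lam * f x) :
    SolvesSchrodingerOn q lam U f := by
  intro x hx
  refine ⟨(hf.differentiable two_ne_zero x).hasDerivAt,
    (hf.differentiable_deriv_two x).hasDerivAt.congr_deriv ?_⟩
  linear_combination -he x hx

theorem neg_deriv_deriv_add_mul (hf : SolvesSchrodingerOn q lam U f) (hx : x ∈ U) :
    -(deriv (deriv f) x) + q x * f x = lam * f x := by
  rw [(hf x hx).2.deriv]
  ring

theorem congr (hU : IsOpen U) (hf : SolvesSchrodingerOn q lam U f) (hfg : EqOn f g U) :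
    SolvesSchrodingerOn q lam U g := by
  intro x hx
  have hfg' : f =ᶠ[𝓝 x] g := eventuallyEq_of_mem (hU.mem_nhds hx) hfg
  rw [← hfg'.deriv_eq, ← hfg hx]
  exact ⟨(hf x hx).1.congr_of_eventuallyEq hfg'.symm,
    (hf x hx).2.congr_of_eventuallyEq hfg'.deriv.symm⟩

theorem hasDerivAt_logDeriv (hg : SolvesSchrodingerOn q mu U g) (hx : x ∈ U) (hgx : g x ≠ 0) :
    HasDerivAt (logDeriv g) (q x - mu - logDeriv g x ^ 2) x := by
  refine ((hg x hx).2.div (hg x hx).1 hgx).congr_deriv ?_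
  rw [logDeriv_apply]
  field_simp

theorem hasDerivAt_wronskian (hg : SolvesSchrodingerOn q mu U g)
    (hf : SolvesSchrodingerOn q lam U f) (hx : x ∈ U) :
    HasDerivAt (wronskian g f) ((mu - lam) * g x * f x) x := by
  refine (((hg x hx).1.mul (hf x hx).2).sub ((hg x hx).2.mul (hf x hx).1)).congr_deriv ?_
  ring

theorem hasDerivAt_wronskian_div (hg : SolvesSchrodingerOn q mu U g)
    (hf : SolvesSchrodingerOn q lam U f) (hx : x ∈ U) (hgx : g x ≠ 0) :
    HasDerivAt (fun y => wronskian g f y / g y)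
      ((mu - lam) * f x - logDeriv g x * (wronskian g f x / g x)) x := by
  refine ((hg.hasDerivAt_wronskian hf hx).div (hg x hx).1 hgx).congr_deriv ?_
  rw [logDeriv_apply]
  field_simp

theorem wronskian_div_eq (hgx : g x ≠ 0) :
    wronskian g f x / g x = deriv f x - logDeriv g x * f x := by
  rw [wronskian, logDeriv_apply]
  field_simp

theorem darboux (hf : SolvesSchrodingerOn q lam U f) (hU : IsOpen U)
    (hg : SolvesSchrodingerOn q mu U g) (hg0 : ∀ x ∈ U, g x ≠ 0) :
    SolvesSchrodingerOn (fun x => q x - 2 * deriv (logDeriv g) x) lam U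
      (fun y => wronskian g f y / g y) := by
  intro x hx
  have hφ := hg.hasDerivAt_wronskian_div hf hx (hg0 x hx)
  have hdφ : deriv (fun y => wronskian g f y / g y) =ᶠ[𝓝 x]
      fun y => (mu - lam) * f y - logDeriv g y * (wronskian g f y / g y) :=
    eventually_of_mem (hU.mem_nhds hx) fun y hy =>
      (hg.hasDerivAt_wronskian_div hf hy (hg0 y hy)).deriv
  have hσ := hg.hasDerivAt_logDeriv hx (hg0 x hx)
  refine ⟨hφ.differentiableAt.hasDerivAt, ?_⟩
  refine ((((hf x hx).1.const_mul (mu - lam)).sub (hσ.mul hφ)).congr_of_eventuallyEq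
    hdφ).congr_deriv ?_
  show _ = (q x - 2 * deriv (logDeriv g) x - lam) * (wronskian g f x / g x)
  rw [hσ.deriv, wronskian_div_eq (hg0 x hx)]
  ring

theorem wronskian_div_wronskian_div (hf : SolvesSchrodingerOn q lam U f)
    (hg : SolvesSchrodingerOn q mu U g) (hx : x ∈ U) (hgx : g x ≠ 0) (hhx : h x ≠ 0) :
    wronskian h (fun y => wronskian g f y / g y) x / h x
      = (mu - lam) * f x - wronskian g f x / g x * (logDeriv g x + logDeriv h x) := by
  rw [wronskian_div_eq hhx, (hg.hasDerivAt_wronskian_div hf hx hgx).deriv]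
  ring

end SolvesSchrodingerOn

end Darboux

theorem deriv_log_eventuallyEq_logDeriv {g : ℝ → ℝ} {U : Set ℝ} {x : ℝ} (hU : IsOpen U)
    (hgd : ∀ y ∈ U, DifferentiableAt ℝ g y) (hg0 : ∀ y ∈ U, g y ≠ 0) (hx : x ∈ U) :
    deriv (fun y => Real.log (g y)) =ᶠ[𝓝 x] logDeriv g :=
  eventually_of_mem (hU.mem_nhds hx) fun y hy =>
    Real.deriv_log_comp_eq_logDeriv (hgd y hy) (hg0 y hy)

theorem double_darboux_general (q f g h : ℝ → ℝ) (lam mu nu : ℝ) (I : Set ℝ) (hI : IsOpen I)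
    (hf : ContDiff ℝ 2 f) (hg : ContDiff ℝ 2 g) (hh : ContDiff ℝ 2 h)
    (hfe : ∀ x, -(deriv (deriv f) x) + q x * f x = lam * f x)
    (hge : ∀ x, -(deriv (deriv g) x) + q x * g x = mu * g x)
    (hhe : ∀ x ∈ I, -(deriv (deriv h) x)
        + (q x - 2 * deriv (deriv (fun y => Real.log (g y))) x) * h x = nu * h x)
    (hg0 : ∀ x ∈ I, g x ≠ 0) (hh0 : ∀ x ∈ I, h x ≠ 0) :
    ∀ x ∈ I,
      -(deriv (deriv (fun y => (mu - lam) * f y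
          - ((g y * deriv f y - deriv g y * f y) / g y)
            * deriv (fun z => Real.log (g z * h z)) y)) x)
        + (q x - 2 * deriv (deriv (fun y => Real.log (g y * h y))) x)
          * ((mu - lam) * f x
            - ((g x * deriv f x - deriv g x * f x) / g x)
              * deriv (fun z => Real.log (g z * h z)) x)
      = lam * ((mu - lam) * f x
          - ((g x * deriv f x - deriv g x * f x) / g x)
            * deriv (fun z => Real.log (g z * h z)) x) := by
  have hfI : SolvesSchrodingerOn q lam I f := .of_contDiff hf fun x _ => hfe x
  have hgI : SolvesSchrodingerOn q mu I g := .of_contDiff hg fun x _ => hge x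
  have hgd : ∀ y ∈ I, DifferentiableAt ℝ g y := fun y _ => hg.differentiable two_ne_zero y
  have hhd : ∀ y ∈ I, DifferentiableAt ℝ h y := fun y _ => hh.differentiable two_ne_zero y
  have hhI : SolvesSchrodingerOn (fun x => q x - 2 * deriv (logDeriv g) x) nu I h :=
    .of_contDiff hh fun x hx => by
      rw [← (deriv_log_eventuallyEq_logDeriv hI hgd hg0 hx).deriv_eq]
      exact hhe x hx
  have hf₂ := (hfI.darboux hI hgI hg0).darboux hI hhI hh0
  have hlog (x : ℝ) (hx : x ∈ I) :
      deriv (fun y => Real.log (g y * h y)) =ᶠ[𝓝 x] logDeriv g + logDeriv h :=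
    (deriv_log_eventuallyEq_logDeriv hI (fun y hy => (hgd y hy).mul (hhd y hy))
      (fun y hy => mul_ne_zero (hg0 y hy) (hh0 y hy)) hx).trans <|
      eventually_of_mem (hI.mem_nhds hx) fun y hy =>
        logDeriv_mul y (hg0 y hy) (hh0 y hy) (hgd y hy) (hhd y hy)
  have hu := hf₂.congr hI (g := fun y => (mu - lam) * f y
      - ((g y * deriv f y - deriv g y * f y) / g y) * deriv (fun z => Real.log (g z * h z)) y)
    fun y hy => by
      rw [hfI.wronskian_div_wronskian_div hgI hy (hg0 y hy) (hh0 y hy), ← Pi.add_apply,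
        ← (hlog y hy).eq_of_nhds]
      rfl
  intro x hx
  have hpot : deriv (deriv fun y => Real.log (g y * h y)) x
      = deriv (logDeriv g) x + deriv (logDeriv h) x := by
    rw [(hlog x hx).deriv_eq]
    exact deriv_add (hgI.hasDerivAt_logDeriv hx (hg0 x hx)).differentiableAt
      (hhI.hasDerivAt_logDeriv hx (hh0 x hx)).differentiableAt
  rw [hpot]
  linear_combination hu.neg_deriv_deriv_add_mul hx

/-- Double Darboux transformation: if `-f'' + q f = λ f`, `-g'' + q g = μ g`,
`-h'' + (q - 2(log g)'') h = ν h`, with `λ ∉ {μ, ν}` and `g, h` nonvanishing on an open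
interval `I`, then `u = (μ - λ) f - (W[g,f]/g) (log (g h))'` satisfies
`-u'' + (q - 2 (log (g h))'') u = λ u` on `I`. -/
theorem double_darboux (q f g h : ℝ → ℝ) (lam mu nu : ℝ) (I : Set ℝ) (hI : IsOpen I)
    (hq : Continuous q) (hf : ContDiff ℝ 2 f) (hg : ContDiff ℝ 2 g) (hh : ContDiff ℝ 2 h)
    (hlm : lam ≠ mu) (hln : lam ≠ nu)
    (hfe : ∀ x, -(deriv (deriv f) x) + q x * f x = lam * f x)
    (hge : ∀ x, -(deriv (deriv g) x) + q x * g x = mu * g x)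
    (hhe : ∀ x ∈ I, -(deriv (deriv h) x)
        + (q x - 2 * deriv (deriv (fun y => Real.log (g y))) x) * h x = nu * h x)
    (hg0 : ∀ x ∈ I, g x ≠ 0) (hh0 : ∀ x ∈ I, h x ≠ 0) :
    ∀ x ∈ I,
      -(deriv (deriv (fun y => (mu - lam) * f y
          - ((g y * deriv f y - deriv g y * f y) / g y)
            * deriv (fun z => Real.log (g z * h z)) y)) x)
        + (q x - 2 * deriv (deriv (fun y => Real.log (g y * h y))) x)
          * ((mu - lam) * f x
            - ((g x * deriv f x - deriv g x * f x) / g x)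
              * deriv (fun z => Real.log (g z * h z)) x)
      = lam * ((mu - lam) * f x
          - ((g x * deriv f x - deriv g x * f x) / g x)
            * deriv (fun z => Real.log (g z * h z)) x) :=
  double_darboux_general q f g h lam mu nu I hI hf hg hh hfe hge hhe hg0 hh0
end

section
/- Double Darboux transformation, equal eigenvalue case: if g satisfies -g'' + q g = μ g, g ≠ 0 on I, and h satisfies -h'' + (q - 2(log g)'')·h = ν h with h ≠ 0 on I, then u = 1/h satisfies -u'' + (q - 2(log(g·h))'')·u = ν·u on I. -/
/-!
Since `(log (g h))'' = (log g)'' + (log h)''` and `(1/h)'' = (2 h'^2 - h h'') / h^3`, the left-hand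
side for `u = 1/h` collapses to `(-h'' + (q - 2 (log g)'') h) / h^2`, which is `ν / h` by the
equation for `h`.
-/

open Filter Topology

section SecondDerivatives

variable {f g : ℝ → ℝ} {x : ℝ}

theorem hasDerivAt_deriv_log_comp (hf : ∀ᶠ y in 𝓝 x, DifferentiableAt ℝ f y)
    (hf' : DifferentiableAt ℝ (deriv f) x) (hfx : f x ≠ 0) :
    HasDerivAt (deriv fun y => Real.log (f y))
      ((deriv (deriv f) x * f x - deriv f x ^ 2) / f x ^ 2) x := by
  have hderiv : deriv (fun y => Real.log (f y)) =ᶠ[𝓝 x] fun y => deriv f y / f y := by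
    filter_upwards [hf, hf.self_of_nhds.continuousAt.eventually_ne hfx] with y hy hy0
    exact (hy.hasDerivAt.log hy0).deriv
  refine ((hf'.hasDerivAt.div hf.self_of_nhds.hasDerivAt hfx).congr_of_eventuallyEq
    hderiv).congr_deriv ?_
  ring

theorem hasDerivAt_deriv_one_div_comp (hf : ∀ᶠ y in 𝓝 x, DifferentiableAt ℝ f y)
    (hf' : DifferentiableAt ℝ (deriv f) x) (hfx : f x ≠ 0) :
    HasDerivAt (deriv fun y => 1 / f y)
      ((2 * deriv f x ^ 2 - f x * deriv (deriv f) x) / f x ^ 3) x := by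
  have hderiv : deriv (fun y => 1 / f y) =ᶠ[𝓝 x] fun y => -deriv f y / f y ^ 2 := by
    filter_upwards [hf, hf.self_of_nhds.continuousAt.eventually_ne hfx] with y hy hy0
    simp only [one_div]
    exact (hy.hasDerivAt.inv hy0).deriv
  refine ((hf'.hasDerivAt.neg.div (hf.self_of_nhds.hasDerivAt.pow 2)
    (pow_ne_zero 2 hfx)).congr_of_eventuallyEq hderiv).congr_deriv ?_
  simp only [Pi.neg_apply, Pi.pow_apply]
  field_simp
  ring

theorem hasDerivAt_deriv_log_mul (hf : ∀ᶠ y in 𝓝 x, DifferentiableAt ℝ f y)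
    (hf' : DifferentiableAt ℝ (deriv f) x) (hfx : f x ≠ 0)
    (hg : ∀ᶠ y in 𝓝 x, DifferentiableAt ℝ g y)
    (hg' : DifferentiableAt ℝ (deriv g) x) (hgx : g x ≠ 0) :
    HasDerivAt (deriv fun y => Real.log (f y * g y))
      ((deriv (deriv f) x * f x - deriv f x ^ 2) / f x ^ 2
        + (deriv (deriv g) x * g x - deriv g x ^ 2) / g x ^ 2) x := by
  have hf0 := hf.self_of_nhds.continuousAt.eventually_ne hfx
  have hg0 := hg.self_of_nhds.continuousAt.eventually_ne hgx
  have hlog : (fun y => Real.log (f y * g y)) =ᶠ[𝓝 x]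
      fun y => Real.log (f y) + Real.log (g y) := by
    filter_upwards [hf0, hg0] with y hfy hgy
    exact Real.log_mul hfy hgy
  have hderiv : deriv (fun y => Real.log (f y * g y)) =ᶠ[𝓝 x]
      fun y => deriv (fun z => Real.log (f z)) y + deriv (fun z => Real.log (g z)) y := by
    filter_upwards [hlog.deriv, hf, hf0, hg, hg0] with y hy hfy hfy0 hgy hgy0
    rw [hy]
    exact deriv_add (hfy.log hfy0) (hgy.log hgy0)
  exact ((hasDerivAt_deriv_log_comp hf hf' hfx).add
    (hasDerivAt_deriv_log_comp hg hg' hgx)).congr_of_eventuallyEq hderiv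

end SecondDerivatives

theorem double_darboux_equal_eigenvalue_general (q g h : ℝ → ℝ) (nu : ℝ) (I : Set ℝ)
    (hg : ContDiff ℝ 2 g) (hh : ContDiff ℝ 2 h)
    (hhe : ∀ x ∈ I, -(deriv (deriv h) x)
        + (q x - 2 * deriv (deriv (fun y => Real.log (g y))) x) * h x = nu * h x)
    (hg0 : ∀ x ∈ I, g x ≠ 0) (hh0 : ∀ x ∈ I, h x ≠ 0) :
    ∀ x ∈ I,
      -(deriv (deriv (fun y => 1 / h y)) x)
        + (q x - 2 * deriv (deriv (fun y => Real.log (g y * h y))) x) * (1 / h x)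
      = nu * (1 / h x) := by
  intro x hx
  have hgd := Eventually.of_forall (f := 𝓝 x) (hg.differentiable two_ne_zero)
  have hhd := Eventually.of_forall (f := 𝓝 x) (hh.differentiable two_ne_zero)
  have hhx := hh0 x hx
  rw [(hasDerivAt_deriv_one_div_comp hhd (hh.differentiable_deriv_two x) hhx).deriv,
    (hasDerivAt_deriv_log_mul hgd (hg.differentiable_deriv_two x) (hg0 x hx)
      hhd (hh.differentiable_deriv_two x) hhx).deriv,
    ← (hasDerivAt_deriv_log_comp hgd (hg.differentiable_deriv_two x) (hg0 x hx)).deriv]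
  field_simp
  linear_combination h x * hhe x hx

/-- Double Darboux transformation, equal eigenvalue case: if `-g'' + q g = μ g`, `g ≠ 0` on `I`,
and `-h'' + (q - 2(log g)'') h = ν h` with `h ≠ 0` on `I`, then `u = 1/h` satisfies
`-u'' + (q - 2 (log (g h))'') u = ν u` on `I`. -/
theorem double_darboux_equal_eigenvalue (q g h : ℝ → ℝ) (mu nu : ℝ) (I : Set ℝ) (hI : IsOpen I)
    (hq : Continuous q) (hg : ContDiff ℝ 2 g) (hh : ContDiff ℝ 2 h)
    (hge : ∀ x, -(deriv (deriv g) x) + q x * g x = mu * g x)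
    (hhe : ∀ x ∈ I, -(deriv (deriv h) x)
        + (q x - 2 * deriv (deriv (fun y => Real.log (g y))) x) * h x = nu * h x)
    (hg0 : ∀ x ∈ I, g x ≠ 0) (hh0 : ∀ x ∈ I, h x ≠ 0) :
    ∀ x ∈ I,
      -(deriv (deriv (fun y => 1 / h y)) x)
        + (q x - 2 * deriv (deriv (fun y => Real.log (g y * h y))) x) * (1 / h x)
      = nu * (1 / h x) :=
  double_darboux_equal_eigenvalue_general q g h nu I hg hh hhe hg0 hh0
end

section
/- Eigenvalue formula from W[h, W[g,f]/g]: under the hypotheses of the double Darboux lemma, the identity (1/h)·W[h, (1/g)·W[g,f]] = (μ − λ)·f − (W[g,f]/g)·(d/dx)[log(g·h)] holds pointwise on the interval where g, h are nonvanishing. -/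
/-!
For eigenfunctions `-f'' + q f = λ f`, `-g'' + q g = μ g` the potential cancels in the derivative
of the Wronskian: `W[g,f]' = g f'' - g'' f = (μ - λ) g f`. Hence
`(W[g,f]/g)' = (μ - λ) f - (W[g,f]/g) · g'/g`, and
`(1/h) W[h, W[g,f]/g] = (W[g,f]/g)' - (W[g,f]/g) · h'/h`; the two logarithmic derivatives
add up to `(log (g h))'`.
-/

section Wronskian

variable {f g : ℝ → ℝ} {x : ℝ}

theorem hasDerivAt_wronskian (hf : DifferentiableAt ℝ f x) (hg : DifferentiableAt ℝ g x)
    (hf' : DifferentiableAt ℝ (deriv f) x) (hg' : DifferentiableAt ℝ (deriv g) x) :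
    HasDerivAt (fun y => g y * deriv f y - deriv g y * f y)
      (g x * deriv (deriv f) x - deriv (deriv g) x * f x) x :=
  ((hg.hasDerivAt.fun_mul hf'.hasDerivAt).fun_sub
    (hg'.hasDerivAt.fun_mul hf.hasDerivAt)).congr_deriv (by ring)

theorem hasDerivAt_wronskian_of_eigen (q : ℝ → ℝ) {lam mu : ℝ}
    (hf : DifferentiableAt ℝ f x) (hg : DifferentiableAt ℝ g x)
    (hf' : DifferentiableAt ℝ (deriv f) x) (hg' : DifferentiableAt ℝ (deriv g) x)
    (hfe : -(deriv (deriv f) x) + q x * f x = lam * f x)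
    (hge : -(deriv (deriv g) x) + q x * g x = mu * g x) :
    HasDerivAt (fun y => g y * deriv f y - deriv g y * f y) ((mu - lam) * g x * f x) x :=
  (hasDerivAt_wronskian hf hg hf' hg').congr_deriv
    (by linear_combination f x * hge - g x * hfe)

theorem hasDerivAt_wronskian_div_of_eigen (q : ℝ → ℝ) {lam mu : ℝ}
    (hf : DifferentiableAt ℝ f x) (hg : DifferentiableAt ℝ g x)
    (hf' : DifferentiableAt ℝ (deriv f) x) (hg' : DifferentiableAt ℝ (deriv g) x)
    (hfe : -(deriv (deriv f) x) + q x * f x = lam * f x)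
    (hge : -(deriv (deriv g) x) + q x * g x = mu * g x) (hg0 : g x ≠ 0) :
    HasDerivAt (fun y => (1 / g y) * (g y * deriv f y - deriv g y * f y))
      ((mu - lam) * f x - (g x * deriv f x - deriv g x * f x) / g x * (deriv g x / g x)) x := by
  refine (((hasDerivAt_const x (1 : ℝ)).fun_div hg.hasDerivAt hg0).fun_mul
    (hasDerivAt_wronskian_of_eigen q hf hg hf' hg' hfe hge)).congr_deriv ?_
  field_simp
  ring

end Wronskian

theorem wronskian_double_darboux_identity_general (q f g h : ℝ → ℝ) (lam mu : ℝ) (I : Set ℝ)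
    (hf : ContDiff ℝ 2 f) (hg : ContDiff ℝ 2 g) (hh : ContDiff ℝ 2 h)
    (hfe : ∀ x, -(deriv (deriv f) x) + q x * f x = lam * f x)
    (hge : ∀ x, -(deriv (deriv g) x) + q x * g x = mu * g x)
    (hg0 : ∀ x ∈ I, g x ≠ 0) (hh0 : ∀ x ∈ I, h x ≠ 0) :
    ∀ x ∈ I,
      (1 / h x) *
        (h x * deriv (fun y => (1 / g y) * (g y * deriv f y - deriv g y * f y)) x
          - deriv h x * ((1 / g x) * (g x * deriv f x - deriv g x * f x)))
      = (mu - lam) * f x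
        - ((g x * deriv f x - deriv g x * f x) / g x)
          * deriv (fun y => Real.log (g y * h y)) x := by
  intro x hx
  have hf1 := hf.differentiable two_ne_zero x
  have hg1 := hg.differentiable two_ne_zero x
  have hh1 := hh.differentiable two_ne_zero x
  have hgx := hg0 x hx
  have hhx := hh0 x hx
  rw [(hasDerivAt_wronskian_div_of_eigen q hf1 hg1 (hf.differentiable_deriv_two x)
      (hg.differentiable_deriv_two x) (hfe x) (hge x) hgx).deriv,
    ((hg1.hasDerivAt.fun_mul hh1.hasDerivAt).log (mul_ne_zero hgx hhx)).deriv]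
  field_simp
  ring

/-- Eigenfunction formula from the double Darboux transformation: under the hypotheses of the
double Darboux lemma, `(1/h) W[h, (1/g) W[g,f]] = (μ − λ) f − (W[g,f]/g) (log (g h))'`
pointwise on the interval where `g` and `h` are nonvanishing. -/
theorem wronskian_double_darboux_identity (q f g h : ℝ → ℝ) (lam mu nu : ℝ) (I : Set ℝ)
    (hI : IsOpen I) (hq : Continuous q)
    (hf : ContDiff ℝ 2 f) (hg : ContDiff ℝ 2 g) (hh : ContDiff ℝ 2 h)
    (hlm : lam ≠ mu) (hln : lam ≠ nu)
    (hfe : ∀ x, -(deriv (deriv f) x) + q x * f x = lam * f x)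
    (hge : ∀ x, -(deriv (deriv g) x) + q x * g x = mu * g x)
    (hhe : ∀ x ∈ I, -(deriv (deriv h) x)
        + (q x - 2 * deriv (deriv (fun y => Real.log (g y))) x) * h x = nu * h x)
    (hg0 : ∀ x ∈ I, g x ≠ 0) (hh0 : ∀ x ∈ I, h x ≠ 0) :
    ∀ x ∈ I,
      (1 / h x) *
        (h x * deriv (fun y => (1 / g y) * (g y * deriv f y - deriv g y * f y)) x
          - deriv h x * ((1 / g x) * (g x * deriv f x - deriv g x * f x)))
      = (mu - lam) * f x
        - ((g x * deriv f x - deriv g x * f x) / g x)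
          * deriv (fun y => Real.log (g y * h y)) x :=
  wronskian_double_darboux_identity_general q f g h lam mu I hf hg hh hfe hge hg0 hh0
end
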